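/- Let 𝒳 = (M, X, ⊥) be a concurrent system such that for every state α, the partial order (𝒞_α, ≤) of cliques c with α·c ≠ ⊥ is a lattice. Then for every state α, any two executions x, y ∈ M_α have a common upper bound in M_α; consequently (M_α, ≤) is a lattice. -/

import Mathlib

namespace TraceDoc

/-- The elementary commutation relation on the free monoid induced by an
independence relation `I`. -/
def traceRel {S : Type*} (I : S → S → Prop) : FreeMonoid S → FreeMonoid S → Prop :=
  fun u v => ∃ a b, I a b ∧ u = FreeMonoid.of a * FreeMonoid.of b ∧
    v = FreeMonoid.of b * FreeMonoid.of a

/-- The congruence on the free monoid generated by the commutations of `I`. -/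
def traceCon {S : Type*} (I : S → S → Prop) : Con (FreeMonoid S) := conGen (traceRel I)

/-- The trace monoid `M(Σ, I)`. -/
abbrev TraceMonoid {S : Type*} (I : S → S → Prop) := (traceCon I).Quotient

/-- Canonical projection from words to traces. -/
def tproj {S : Type*} (I : S → S → Prop) : FreeMonoid S →* TraceMonoid I := (traceCon I).mk'

/-- Image of a letter in the trace monoid. -/
def temb {S : Type*} (I : S → S → Prop) (a : S) : TraceMonoid I := tproj I (FreeMonoid.of a)

/-- Any monoid hom to a commutative monoid factors through the trace congruence. -/
lemma traceCon_le_ker {S N : Type*} [CommMonoid N] (I : S → S → Prop)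
    (f : FreeMonoid S →* N) : traceCon I ≤ Con.ker f := by
  apply Con.conGen_le.2
  rintro u v ⟨a, b, _, rfl, rfl⟩
  simp [Con.ker_rel, map_mul, mul_comm]

/-- Length of a trace (well defined since commutations preserve length). -/
def tlen {S : Type*} (I : S → S → Prop) : TraceMonoid I → ℕ := fun x =>
  Multiplicative.toAdd
    (Con.lift _ (FreeMonoid.lift fun _ : S => Multiplicative.ofAdd (1 : ℕ))
      (traceCon_le_ker I _) x)

/-- Number of occurrences of the letter `a` in a trace (well defined). -/
def tcount {S : Type*} [DecidableEq S] (I : S → S → Prop) (a : S) : TraceMonoid I → ℕ := fun x =>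
  Multiplicative.toAdd
    (Con.lift _ (FreeMonoid.lift fun b : S =>
        Multiplicative.ofAdd (if b = a then (1 : ℕ) else 0))
      (traceCon_le_ker I _) x)

/-- Left divisibility in a trace monoid. -/
def tle {S : Type*} (I : S → S → Prop) (x y : TraceMonoid I) : Prop := ∃ z, y = x * z

/-- A clique: a finite set of pairwise independent letters. -/
def IsClique {S : Type*} (I : S → S → Prop) (s : Finset S) : Prop := (↑s : Set S).Pairwise I

/-- The type of cliques of the trace monoid. -/
abbrev Clique {S : Type*} (I : S → S → Prop) := {s : Finset S // IsClique I s}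

lemma temb_commute {S : Type*} {I : S → S → Prop} {a b : S} (h : I a b) :
    Commute (temb I a) (temb I b) := by
  have : (traceCon I) (FreeMonoid.of a * FreeMonoid.of b) (FreeMonoid.of b * FreeMonoid.of a) :=
    ConGen.Rel.of _ _ ⟨a, b, h, rfl, rfl⟩
  simpa [Commute, SemiconjBy, temb, tproj, ← map_mul] using (traceCon I).eq.2 this

/-- The product of a clique in the trace monoid. -/
def cprod {S : Type*} (I : S → S → Prop) (c : Clique I) : TraceMonoid I :=
  c.1.noncommProd (temb I) (fun a ha b hb hab => temb_commute (c.2 ha hb hab))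

/-- The Cartier–Foata normality relation `c → d` between cliques. -/
def NormalPair {S : Type*} (I : S → S → Prop) (c d : Clique I) : Prop :=
  ∀ b ∈ d.1, ∃ a ∈ c.1, ¬ I a b

/-- A concurrent system: a right action of the trace monoid on the states
`X` together with a sink `⊥` (modelled by `none`). -/
structure ConcurrentSystem {S : Type*} (I : S → S → Prop) (X : Type*) where
  act : Option X → TraceMonoid I → Option X
  act_one : ∀ α, act α 1 = α
  act_mul : ∀ α x y, act α (x * y) = act (act α x) y
  act_bot : ∀ x, act none x = none

/-- The set `M_α` of executions from state `α`. -/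
def ConcurrentSystem.execs {S : Type*} {I : S → S → Prop} {X : Type*}
    (C : ConcurrentSystem I X) (α : X) : Set (TraceMonoid I) :=
  {x | C.act (some α) x ≠ none}

end TraceDoc

section Aux
open TraceDoc

variable {S : Type*} [DecidableEq S] {I : S → S → Prop}

lemma tlen_mul (x y : TraceMonoid I) : tlen I (x * y) = tlen I x + tlen I y := by
  simp [tlen, map_mul, toAdd_mul]

lemma tlen_temb (a : S) : tlen I (temb I a) = 1 := by
  simp [tlen, temb, tproj, Con.lift_mk']

lemma trace_decomp (x : TraceMonoid I) :
    x = 1 ∨ ∃ a x', x = temb I a * x' := by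
  obtain ⟨w, rfl⟩ := Con.mk'_surjective x
  rcases hw : FreeMonoid.toList w with _ | ⟨a, l⟩
  · left
    have : w = 1 := by rw [← FreeMonoid.ofList_toList w, hw]; rfl
    rw [this, map_one]
  · right
    refine ⟨a, tproj I (FreeMonoid.ofList l), ?_⟩
    have hw' : w = FreeMonoid.of a * FreeMonoid.ofList l := by
      rw [← FreeMonoid.ofList_toList w, hw, FreeMonoid.ofList_cons]
    show tproj I w = _
    rw [hw', map_mul]
    rfl

lemma clique_singleton (a : S) : IsClique I ({a} : Finset S) := by
  simp [IsClique]

variable {X : Type*} (C : ConcurrentSystem I X)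

lemma execs_mul_left {α : X} {x y : TraceMonoid I}
    (h : x * y ∈ C.execs α) : x ∈ C.execs α := by
  intro hx
  apply h
  rw [C.act_mul, hx, C.act_bot]

/-- From two enabled distinct letters we get independence and the product enabled. -/
lemma enabled_pair
    (hcl : ∀ (α : X) (c d : Clique I), cprod I c ∈ C.execs α →
      cprod I d ∈ C.execs α →
      ∃ e : Clique I, e.1 = c.1 ∪ d.1 ∧ cprod I e ∈ C.execs α)
    {α : X} {a b : S} (hab : a ≠ b)
    (ha : temb I a ∈ C.execs α) (hb : temb I b ∈ C.execs α) :
    I a b ∧ temb I a * temb I b ∈ C.execs α := by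
  have hca : cprod I ⟨{a}, clique_singleton a⟩ ∈ C.execs α := by
    simpa [cprod, Finset.noncommProd_singleton] using ha
  have hcb : cprod I ⟨{b}, clique_singleton b⟩ ∈ C.execs α := by
    simpa [cprod, Finset.noncommProd_singleton] using hb
  obtain ⟨⟨s, hs⟩, he, hex⟩ := hcl α _ _ hca hcb
  simp only at he
  have hs' : s = insert a ({b} : Finset S) := by
    rw [he]; rfl
  subst hs'
  have hIab : I a b := hs (by simp) (by simp) hab
  refine ⟨hIab, ?_⟩
  have hprod : cprod I ⟨insert a ({b} : Finset S), hs⟩ = temb I a * temb I b := by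
    unfold cprod
    change ({a, b} : Finset S).noncommProd (temb I)
      (show (↑({a, b} : Finset S) : Set S).Pairwise (Function.onFun Commute (temb I)) from
        fun x hx y hy hxy =>
          temb_commute ((show (↑({a, b} : Finset S) : Set S).Pairwise I from hs) hx hy hxy)) = _
    rw [Finset.noncommProd_insert_of_notMem _ _ _ _ (by simp [hab]),
      Finset.noncommProd_singleton]
  rwa [hprod] at hex

/-- Key one-step lemma: an enabled letter can be pushed past any execution. -/
lemma step_lemma
    (hcl : ∀ (α : X) (c d : Clique I), cprod I c ∈ C.execs α →
      cprod I d ∈ C.execs α →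
      ∃ e : Clique I, e.1 = c.1 ∪ d.1 ∧ cprod I e ∈ C.execs α) :
    ∀ (n : ℕ) (α : X) (a : S) (y : TraceMonoid I), tlen I y = n →
      temb I a ∈ C.execs α → y ∈ C.execs α →
      (∃ y', y = temb I a * y') ∨
      (y * temb I a ∈ C.execs α ∧ ∃ w, y * temb I a = temb I a * w) := by
  intro n
  induction n using Nat.strong_induction_on with
  | _ n IH =>
    intro α a y hlen ha hy
    rcases trace_decomp y with rfl | ⟨b, y', rfl⟩
    · right
      refine ⟨by simpa using ha, 1, by simp⟩
    · have hb : temb I b ∈ C.execs α := execs_mul_left C hy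
      obtain ⟨β, hβ⟩ : ∃ β, C.act (some α) (temb I b) = some β := by
        rcases h : C.act (some α) (temb I b) with _ | β
        · exact absurd h hb
        · exact ⟨β, rfl⟩
      have hy' : y' ∈ C.execs β := by
        intro h
        apply hy
        rw [C.act_mul, hβ, h]
      rcases eq_or_ne a b with rfl | hab
      · exact Or.inl ⟨y', rfl⟩
      · obtain ⟨hIab, hab2⟩ := enabled_pair C hcl hab ha hb
        have hcomm : temb I a * temb I b = temb I b * temb I a := temb_commute hIab
        have haβ : temb I a ∈ C.execs β := by
          rw [hcomm] at hab2
          intro h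
          apply hab2
          rw [C.act_mul, hβ, h]
        have hlt : tlen I y' < n := by
          subst hlen
          rw [tlen_mul, tlen_temb]
          omega
        rcases IH _ hlt β a y' rfl haβ hy' with ⟨w, rfl⟩ | ⟨h1, w, h2⟩
        · left
          exact ⟨temb I b * w, by rw [← mul_assoc, ← mul_assoc, hcomm]⟩
        · right
          constructor
          · intro h
            apply h1
            rw [mul_assoc, C.act_mul, hβ] at h
            exact h
          · exact ⟨temb I b * w, by
              rw [mul_assoc, h2, ← mul_assoc, ← mul_assoc, hcomm]⟩

end Aux

open TraceDoc in
/-- If in a concurrent system every local poset of enabled cliques is a lattice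
(the union of two enabled cliques is an enabled clique), then any two
executions from a common state have a common upper bound among executions,
i.e. the system is deterministic. -/
theorem stmt12 {S X : Type*} [Fintype S] [DecidableEq S] [Fintype X]
    (I : S → S → Prop) (hsym : Symmetric I) (hirr : ∀ a, ¬ I a a)
    (C : ConcurrentSystem I X)
    (hcl : ∀ (α : X) (c d : Clique I), cprod I c ∈ C.execs α →
      cprod I d ∈ C.execs α →
      ∃ e : Clique I, e.1 = c.1 ∪ d.1 ∧ cprod I e ∈ C.execs α) :
    ∀ (α : X) (x y : TraceMonoid I), x ∈ C.execs α → y ∈ C.execs α →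
      ∃ z ∈ C.execs α, tle I x z ∧ tle I y z := by

  have key : ∀ (n : ℕ) (α : X) (x y : TraceMonoid I), tlen I x = n →
      x ∈ C.execs α → y ∈ C.execs α →
      ∃ z ∈ C.execs α, tle I x z ∧ tle I y z := by
    intro n
    induction n using Nat.strong_induction_on with
    | _ n IH =>
      intro α x y hlen hx hy
      rcases trace_decomp x with rfl | ⟨a, x', rfl⟩
      · exact ⟨y, hy, ⟨y, (one_mul y).symm⟩, ⟨1, (mul_one y).symm⟩⟩
      · have ha : temb I a ∈ C.execs α := execs_mul_left C hx
        obtain ⟨β, hβ⟩ : ∃ β, C.act (some α) (temb I a) = some β := by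
          rcases h : C.act (some α) (temb I a) with _ | β
          · exact absurd h ha
          · exact ⟨β, rfl⟩
        have hx' : x' ∈ C.execs β := by
          intro h; apply hx; rw [C.act_mul, hβ, h]
        have hlt : tlen I x' < n := by
          subst hlen; rw [tlen_mul, tlen_temb]; omega
        rcases step_lemma C hcl (tlen I y) α a y rfl ha hy with ⟨y', rfl⟩ | ⟨h1, w, h2⟩
        · have hy' : y' ∈ C.execs β := by
            intro h; apply hy; rw [C.act_mul, hβ, h]
          obtain ⟨z', hz', ⟨u, hu⟩, ⟨v, hv⟩⟩ := IH _ hlt β x' y' rfl hx' hy'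
          refine ⟨temb I a * z', ?_, ⟨u, by rw [mul_assoc, ← hu]⟩,
            ⟨v, by rw [mul_assoc, ← hv]⟩⟩
          intro h
          apply hz'
          rw [C.act_mul, hβ] at h
          exact h
        · have hw : w ∈ C.execs β := by
            intro h
            apply h1
            rw [h2, C.act_mul, hβ, h]
          obtain ⟨z', hz', ⟨u, hu⟩, ⟨v, hv⟩⟩ := IH _ hlt β x' w rfl hx' hw
          refine ⟨temb I a * z', ?_, ⟨u, by rw [mul_assoc, ← hu]⟩,
            ⟨temb I a * v, ?_⟩⟩
          · intro h
            apply hz'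
            rw [C.act_mul, hβ] at h
            exact h
          · calc temb I a * z' = temb I a * (w * v) := by rw [← hv]
              _ = (y * temb I a) * v := by rw [← mul_assoc, ← h2]
              _ = y * (temb I a * v) := by rw [mul_assoc]
  intro α x y hx hy
  exact key (tlen I x) α x y rfl hx hy
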